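/- Let Y_1, ..., Y_m be based CW-complexes and u ∈ H^p(Ŷ^J), v ∈ H^q(Ŷ^L) with I = J ∪ L. Define u * v = (Δ̂_I^{J,L})*(u ⊗ v) ∈ H^{p+q}(Ŷ^I). Then Π̂_I^*(u * v) = Π̂_J^*(u) ⌣ Π̂_L^*(v) in H^{p+q}(Y_1 × ⋯ × Y_m). -/

import Mathlib

/-! Both sides are pullbacks of `u ⊗ v` to `Y_1 × ⋯ × Y_m`. A cup product is the cross product
pulled back along the reduced diagonal, and naturality of `⊗` turns `Π̂_J^* u ⊗ Π̂_L^* v` into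
the pullback of `u ⊗ v` along `Π̂_J ∧ Π̂_L`. It remains that `Δ̂ ∘ Π̂_{J ∪ L}` and
`(Π̂_J ∧ Π̂_L) ∘ Δ` are the same map, which holds on the nose. -/

noncomputable section

/-- The relation collapsing a subset `S` of `Y` to a point. -/
def collapseRel {Y : Type} (S : Set Y) : Y → Y → Prop :=
  fun a b => a = b ∨ (a ∈ S ∧ b ∈ S)

/-- The quotient space of `Y` obtained by collapsing `S ⊆ Y` to a point. -/
def Collapse {Y : Type} [TopologicalSpace Y] (S : Set Y) : Type :=
  Quot (collapseRel S)

instance {Y : Type} [TopologicalSpace Y] (S : Set Y) : TopologicalSpace (Collapse S) :=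
  inferInstanceAs (TopologicalSpace (Quot (collapseRel S)))

/-- The quotient map `Y → Y/S`. -/
def Collapse.mk {Y : Type} [TopologicalSpace Y] (S : Set Y) (y : Y) : Collapse S :=
  Quot.mk _ y

lemma Collapse.continuous_mk {Y : Type} [TopologicalSpace Y] (S : Set Y) :
    Continuous (Collapse.mk S) := continuous_quot_mk

lemma Collapse.sound {Y : Type} [TopologicalSpace Y] {S : Set Y} {a b : Y}
    (ha : a ∈ S) (hb : b ∈ S) : Collapse.mk S a = Collapse.mk S b :=
  Quot.sound (Or.inr ⟨ha, hb⟩)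

/-- A pointed topological space. -/
structure PointedSpace where
  carrier : Type
  [top : TopologicalSpace carrier]
  pt : carrier

attribute [instance] PointedSpace.top

/-- The wedge `Y ∨ Z` inside `Y × Z`. -/
def smashWedge {Y Z : Type} [TopologicalSpace Y] [TopologicalSpace Z] (y0 : Y) (z0 : Z) :
    Set (Y × Z) := {p | p.1 = y0 ∨ p.2 = z0}

/-- The smash product `Y ∧ Z` of pointed spaces. -/
def Smash {Y Z : Type} [TopologicalSpace Y] [TopologicalSpace Z] (y0 : Y) (z0 : Z) : Type :=
  Collapse (smashWedge y0 z0)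

instance {Y Z : Type} [TopologicalSpace Y] [TopologicalSpace Z] (y0 : Y) (z0 : Z) :
    TopologicalSpace (Smash y0 z0) := inferInstanceAs (TopologicalSpace (Collapse _))

/-- The quotient map `Y × Z → Y ∧ Z`. -/
def smashMk {Y Z : Type} [TopologicalSpace Y] [TopologicalSpace Z] (y0 : Y) (z0 : Z)
    (p : Y × Z) : Smash y0 z0 := Collapse.mk _ p

/-- The basepoint of the smash product. -/
def smashPt {Y Z : Type} [TopologicalSpace Y] [TopologicalSpace Z] (y0 : Y) (z0 : Z) :
    Smash y0 z0 := smashMk y0 z0 (y0, z0)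

/-- Smash product of pointed spaces, as a pointed space. -/
def SmashPS (Y Z : PointedSpace) : PointedSpace where
  carrier := Smash Y.pt Z.pt
  pt := smashPt Y.pt Z.pt

/-- The reduced diagonal `Y → Y ∧ Y`. -/
def reducedDiag (Y : PointedSpace) : C(Y.carrier, (SmashPS Y Y).carrier) :=
  ⟨fun y => smashMk Y.pt Y.pt (y, y),
    (Collapse.continuous_mk _).comp (continuous_id.prodMk continuous_id)⟩

/-- The smash `f ∧ g` of two based maps. -/
def smashMap {Y Z Y' Z' : PointedSpace} (f : C(Y.carrier, Y'.carrier)) (hf : f Y.pt = Y'.pt)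
    (g : C(Z.carrier, Z'.carrier)) (hg : g Z.pt = Z'.pt) :
    C((SmashPS Y Z).carrier, (SmashPS Y' Z').carrier) := by
  refine ⟨Quot.lift (fun p => smashMk Y'.pt Z'.pt (f p.1, g p.2)) ?_, ?_⟩
  · rintro a b (rfl | ⟨ha, hb⟩)
    · rfl
    · refine Collapse.sound ?_ ?_ <;>
      · first
        | exact ha.imp (fun h => by rw [h, hf]) (fun h => by rw [h, hg])
        | exact hb.imp (fun h => by rw [h, hf]) (fun h => by rw [h, hg])
  · exact continuous_quot_lift _ ((Collapse.continuous_mk _).comp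
      ((f.continuous.comp continuous_fst).prodMk (g.continuous.comp continuous_snd)))

/-- The unreduced cylinder set collapsed to form the reduced suspension. -/
def suspCollapseSet (U : Type) [TopologicalSpace U] (u0 : U) : Set (U × unitInterval) :=
  {p | p.2 = 0 ∨ p.2 = 1 ∨ p.1 = u0}

/-- The reduced suspension `ΣU` of a pointed space. -/
def Susp {U : Type} [TopologicalSpace U] (u0 : U) : Type :=
  Collapse (suspCollapseSet U u0)

instance {U : Type} [TopologicalSpace U] (u0 : U) : TopologicalSpace (Susp u0) :=
  inferInstanceAs (TopologicalSpace (Collapse _))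

/-- The basepoint of the reduced suspension. -/
def suspBase {U : Type} [TopologicalSpace U] (u0 : U) : Susp u0 :=
  Collapse.mk _ (u0, 0)

/-- Reduced suspension as a pointed space. -/
def SuspPS (U : PointedSpace) : PointedSpace where
  carrier := Susp U.pt
  pt := suspBase U.pt

/-- The suspension `Σf` of a based map `f`. -/
def suspCMap {U V : PointedSpace} (f : C(V.carrier, U.carrier)) (hf : f V.pt = U.pt) :
    C(Susp V.pt, Susp U.pt) := by
  refine ⟨Quot.lift (fun p => Collapse.mk (suspCollapseSet U.carrier U.pt) (f p.1, p.2)) ?_, ?_⟩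
  · rintro a b (rfl | ⟨ha, hb⟩)
    · rfl
    · refine Collapse.sound ?_ ?_
      · exact ha.imp id (fun h => h.imp id (fun h' => by rw [h', hf]))
      · exact hb.imp id (fun h => h.imp id (fun h' => by rw [h', hf]))
  · exact continuous_quot_lift _ ((Collapse.continuous_mk _).comp
      ((f.continuous.comp continuous_fst).prodMk continuous_snd))

end
noncomputable section

variable {m : ℕ}

/-- The fat wedge inside the product `∏_{i ∈ I} Y_i`: points with some coordinate
at the basepoint. -/
def fatWedge (Y : Fin m → Type) [∀ i, TopologicalSpace (Y i)] (y0 : ∀ i, Y i)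
    (I : Finset (Fin m)) : Set (∀ i : I, Y i) :=
  {f | ∃ i : I, f i = y0 i}

/-- The smash product `Ŷ^I = ⋀_{i ∈ I} Y_i`, as the product modulo the fat wedge. -/
def HatY (Y : Fin m → Type) [∀ i, TopologicalSpace (Y i)] (y0 : ∀ i, Y i)
    (I : Finset (Fin m)) : Type :=
  Collapse (fatWedge Y y0 I)

instance (Y : Fin m → Type) [∀ i, TopologicalSpace (Y i)] (y0 : ∀ i, Y i)
    (I : Finset (Fin m)) : TopologicalSpace (HatY Y y0 I) :=
  inferInstanceAs (TopologicalSpace (Collapse _))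

/-- The quotient map onto `Ŷ^I`. -/
def hatMk (Y : Fin m → Type) [∀ i, TopologicalSpace (Y i)] (y0 : ∀ i, Y i)
    (I : Finset (Fin m)) (f : ∀ i : I, Y i) : HatY Y y0 I :=
  Collapse.mk _ f

/-- The basepoint of `Ŷ^I`. -/
def hatBase (Y : Fin m → Type) [∀ i, TopologicalSpace (Y i)] (y0 : ∀ i, Y i)
    (I : Finset (Fin m)) : HatY Y y0 I :=
  hatMk Y y0 I (fun i => y0 i)

/-- `Ŷ^I` as a pointed space. -/
def HatPS (Y : Fin m → Type) [∀ i, TopologicalSpace (Y i)] (y0 : ∀ i, Y i)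
    (I : Finset (Fin m)) : PointedSpace where
  carrier := HatY Y y0 I
  pt := hatBase Y y0 I

/-- The projection `Π̂_I : Y_1 × ⋯ × Y_m → Ŷ^I`. -/
def hatProj (Y : Fin m → Type) [∀ i, TopologicalSpace (Y i)] (y0 : ∀ i, Y i)
    (I : Finset (Fin m)) : C((∀ i, Y i), HatY Y y0 I) :=
  ⟨fun y => hatMk Y y0 I (fun i => y i),
    (Collapse.continuous_mk _).comp (continuous_pi fun i => continuous_apply (i : Fin m))⟩

/-- Restriction of coordinates along `J ⊆ I`. -/
def restrFin {Y : Fin m → Type} {J I : Finset (Fin m)} (hJI : J ⊆ I)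
    (f : ∀ i : I, Y i) : ∀ j : J, Y j :=
  fun j => f ⟨j, hJI j.2⟩

lemma continuous_restrFin {Y : Fin m → Type} [∀ i, TopologicalSpace (Y i)]
    {J I : Finset (Fin m)} (hJI : J ⊆ I) :
    Continuous (restrFin (Y := Y) hJI) :=
  continuous_pi fun _ => continuous_apply _

/-- The partial diagonal `Δ̂_I^{J,L} : Ŷ^I → Ŷ^J ∧ Ŷ^L` for `J ∪ L = I`. -/
def partialDiag (Y : Fin m → Type) [∀ i, TopologicalSpace (Y i)] (y0 : ∀ i, Y i)
    {J L I : Finset (Fin m)} (hJ : J ⊆ I) (hL : L ⊆ I)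
    (hcov : ∀ i ∈ I, i ∈ J ∨ i ∈ L) :
    C(HatY Y y0 I, Smash (hatBase Y y0 J) (hatBase Y y0 L)) := by
  refine ⟨Quot.lift
    (fun f => smashMk _ _ (hatMk Y y0 J (restrFin hJ f), hatMk Y y0 L (restrFin hL f))) ?_, ?_⟩
  · rintro a b (rfl | ⟨ha, hb⟩)
    · rfl
    · have key : ∀ f : ∀ i : I, Y i, f ∈ fatWedge Y y0 I →
        (hatMk Y y0 J (restrFin hJ f), hatMk Y y0 L (restrFin hL f)) ∈
          smashWedge (hatBase Y y0 J) (hatBase Y y0 L) := by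
        rintro f ⟨i, hi⟩
        rcases hcov i i.2 with hiJ | hiL
        · left
          exact Collapse.sound ⟨⟨i, hiJ⟩, hi⟩ ⟨⟨i, hiJ⟩, rfl⟩
        · right
          exact Collapse.sound ⟨⟨i, hiL⟩, hi⟩ ⟨⟨i, hiL⟩, rfl⟩
      exact Collapse.sound (key a ha) (key b hb)
  · exact continuous_quot_lift _ ((Collapse.continuous_mk _).comp
      ((((Collapse.continuous_mk _).comp (continuous_restrFin hJ)).prodMk
        ((Collapse.continuous_mk _).comp (continuous_restrFin hL)))))

end
noncomputable section

/-- An abstraction of reduced (singular) cohomology: a contravariant homotopy-invariant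
functor on spaces, vanishing in positive degrees on constants, equipped with external
cross products into smash products and with cup products computed by pulling the cross
product back along the reduced diagonal. -/
structure ReducedCohomologyTheory : Type 1 where
  H : ℕ → PointedSpace → Type
  zero : ∀ n Y, H n Y
  pull : ∀ {Y Z : PointedSpace}, C(Y.carrier, Z.carrier) → ∀ {n}, H n Z → H n Y
  pull_id : ∀ {Y : PointedSpace} {n} (u : H n Y), pull (ContinuousMap.id Y.carrier) u = u
  pull_comp : ∀ {Y Z W : PointedSpace} (f : C(Y.carrier, Z.carrier))
    (g : C(Z.carrier, W.carrier)) {n} (u : H n W), pull (g.comp f) u = pull f (pull g u)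
  pull_homotopic : ∀ {Y Z : PointedSpace} (f g : C(Y.carrier, Z.carrier)),
    f.Homotopic g → ∀ {n} (u : H n Z), pull f u = pull g u
  pull_const : ∀ {Y Z : PointedSpace} (c : Z.carrier) {n}, 0 < n →
    ∀ u : H n Z, pull (ContinuousMap.const Y.carrier c) u = zero n Y
  cross : ∀ {Y Z : PointedSpace} {p q}, H p Y → H q Z → H (p + q) (SmashPS Y Z)
  cup : ∀ {Y : PointedSpace} {p q}, H p Y → H q Y → H (p + q) Y
  cup_eq : ∀ {Y : PointedSpace} {p q} (u : H p Y) (v : H q Y),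
    cup u v = pull (reducedDiag Y) (cross u v)
  cross_natural : ∀ {Y Y' Z Z' : PointedSpace} (f : C(Y.carrier, Y'.carrier))
    (hf : f Y.pt = Y'.pt) (g : C(Z.carrier, Z'.carrier)) (hg : g Z.pt = Z'.pt)
    {p q} (u : H p Y') (v : H q Z'),
    pull (smashMap f hf g hg) (cross u v) = cross (pull f u) (pull g v)

end

namespace ReducedCohomologyTheory

theorem cup_pull_pull (E : ReducedCohomologyTheory) {X Y Z : PointedSpace}
    (f : C(X.carrier, Y.carrier)) (hf : f X.pt = Y.pt)
    (g : C(X.carrier, Z.carrier)) (hg : g X.pt = Z.pt) {p q : ℕ}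
    (u : E.H p Y) (v : E.H q Z) :
    E.cup (E.pull f u) (E.pull g v) =
      E.pull ((smashMap f hf g hg).comp (reducedDiag X)) (E.cross u v) := by
  rw [E.cup_eq, ← E.cross_natural, E.pull_comp]

end ReducedCohomologyTheory

noncomputable section

/-- The product `Y_1 × ⋯ × Y_m` as a pointed space. -/
def ProdPS {m : ℕ} (Y : Fin m → Type) [∀ i, TopologicalSpace (Y i)]
    (y0 : ∀ i, Y i) : PointedSpace where
  carrier := ∀ i, Y i
  pt := y0

theorem partialDiag_comp_hatProj {m : ℕ} (Y : Fin m → Type) [∀ i, TopologicalSpace (Y i)]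
    (y0 : ∀ i, Y i) {J L I : Finset (Fin m)} (hJ : J ⊆ I) (hL : L ⊆ I)
    (hcov : ∀ i ∈ I, i ∈ J ∨ i ∈ L) :
    (partialDiag Y y0 hJ hL hcov).comp (hatProj Y y0 I) =
      (smashMap (Y := ProdPS Y y0) (Z := ProdPS Y y0) (Y' := HatPS Y y0 J)
        (Z' := HatPS Y y0 L) (hatProj Y y0 J) rfl (hatProj Y y0 L) rfl).comp
        (reducedDiag (ProdPS Y y0)) :=
  rfl

/-- Let `Y_1, …, Y_m` be based CW-complexes, `u ∈ H^p(Ŷ^J)`,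
`v ∈ H^q(Ŷ^L)` with `I = J ∪ L`, and let `u * v = (Δ̂_I^{J,L})^*(u ⊗ v) ∈ H^{p+q}(Ŷ^I)`
be the star product.  Then `Π̂_I^*(u * v) = Π̂_J^*(u) ⌣ Π̂_L^*(v)` in
`H^{p+q}(Y_1 × ⋯ × Y_m)`. -/
theorem star_product_pullback_eq_cup {m : ℕ} (E : ReducedCohomologyTheory)
    (Y : Fin m → Type) [∀ i, TopologicalSpace (Y i)] (y0 : ∀ i, Y i)
    (J L : Finset (Fin m)) {p q : ℕ}
    (u : E.H p (HatPS Y y0 J)) (v : E.H q (HatPS Y y0 L)) :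
    E.pull (hatProj Y y0 (J ∪ L))
        (E.pull
          (partialDiag Y y0 (J := J) (L := L) (I := J ∪ L)
            Finset.subset_union_left Finset.subset_union_right
            (fun i hi => Finset.mem_union.mp hi))
          (E.cross u v) : E.H (p + q) (HatPS Y y0 (J ∪ L))) =
      (E.cup (E.pull (hatProj Y y0 J) u) (E.pull (hatProj Y y0 L) v)
        : E.H (p + q) (ProdPS Y y0)) := by
  calc _ = E.pull ((partialDiag Y y0 _ _ _).comp (hatProj Y y0 (J ∪ L))) (E.cross u v) :=
        (E.pull_comp (Y := ProdPS Y y0) _ _ _).symm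
    _ = _ := by rw [partialDiag_comp_hatProj]
    _ = _ := (E.cup_pull_pull _ rfl _ rfl u v).symm

end
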